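/- Let G be the group with presentation ⟨v₁,v₂,h | v₁hv₁⁻¹h⁻¹, v₂hv₂⁻¹h, v₁²v₂²⟩ (the fundamental group of N₃). Then there are exactly 7 surjective homomorphisms G → ℤ/2, and the map v₁ ↦ v₁, v₂ ↦ v₂h, h ↦ h extends to an automorphism θ of G satisfying φ₁ ∘ θ = φ₂, where (φ₁(v₁),φ₁(v₂),φ₁(h))=(1,1,1) and (φ₂(v₁),φ₂(v₂),φ₂(h))=(1,0,1). -/

import Mathlib

open FreeGroup

/-- Relators of π₁(N₃) = ⟨v₁,v₂,h | v₁hv₁⁻¹h⁻¹, v₂hv₂⁻¹h, v₁²v₂²⟩,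
generators v₁=0, v₂=1, h=2. -/
def relsN3 : Set (FreeGroup (Fin 3)) :=
  { of 0 * of 2 * (of 0)⁻¹ * (of 2)⁻¹,
    of 1 * of 2 * (of 1)⁻¹ * of 2,
    of 0 ^ 2 * of 1 ^ 2 }

/-- Reduction mod 2, multiplicatively. -/
def mod2 : Multiplicative ℤ →* Multiplicative (ZMod 2) :=
  AddMonoidHom.toMultiplicative (Int.castAddHom (ZMod 2))

/-!
Homomorphisms from `π₁(N₃)` to `ℤ/2` are arbitrary assignments of values to the three
generators, since every relator maps to `1` in an abelian group of exponent `2`; the surjective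
ones are the `2³ - 1 = 7` nonzero assignments.

Since `v₂` conjugates `h` to `h⁻¹`, the substitution `v₂ ↦ v₂ hⁿ` preserves all relators for
every `n : ℤ`; these substitutions compose additively in `n`, so each one is an automorphism
with inverse `v₂ ↦ v₂ h⁻ⁿ`.
-/

theorem MonoidHom.surjective_iff_ne_one {G : Type*} [Group G]
    (φ : G →* Multiplicative (ZMod 2)) : Function.Surjective φ ↔ φ ≠ 1 := by
  refine ⟨fun hφ hone => ?_, fun hne y => ?_⟩
  · obtain ⟨g, hg⟩ := hφ (Multiplicative.ofAdd 1)
    rw [hone, MonoidHom.one_apply] at hg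
    exact absurd hg (by decide)
  · obtain ⟨g, hg⟩ := DFunLike.ne_iff.mp hne
    have two_values : ∀ u v : Multiplicative (ZMod 2), v ≠ 1 → u = 1 ∨ u = v := by decide
    rcases two_values y (φ g) hg with rfl | rfl
    · exact ⟨1, map_one φ⟩
    · exact ⟨g, rfl⟩

namespace N3

abbrev v₁ : PresentedGroup relsN3 := PresentedGroup.of 0
abbrev v₂ : PresentedGroup relsN3 := PresentedGroup.of 1
abbrev h : PresentedGroup relsN3 := PresentedGroup.of 2

section ElementaryAbelian

variable {M : Type*} [CommGroup M]

theorem lift_rels_eq_one (hM : ∀ x : M, x * x = 1) (f : Fin 3 → M) :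
    ∀ r ∈ relsN3, FreeGroup.lift f r = 1 := by
  rintro r (rfl | rfl | rfl) <;>
    simp only [_root_.map_mul, _root_.map_inv, FreeGroup.lift_apply_of, pow_two]
  · rw [mul_right_comm, mul_inv_cancel_right, mul_inv_cancel]
  · rw [mul_right_comm, mul_assoc (f 1), hM, mul_one, mul_inv_cancel]
  · rw [hM, hM, one_mul]

noncomputable def homEquiv (hM : ∀ x : M, x * x = 1) :
    (PresentedGroup relsN3 →* M) ≃ (Fin 3 → M) where
  toFun φ i := φ (PresentedGroup.of i)
  invFun f := PresentedGroup.toGroup (lift_rels_eq_one hM f)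
  left_inv _ := PresentedGroup.ext fun _ => PresentedGroup.toGroup.of _
  right_inv _ := funext fun _ => PresentedGroup.toGroup.of _

theorem homEquiv_eq_one_iff (hM : ∀ x : M, x * x = 1) (φ : PresentedGroup relsN3 →* M) :
    homEquiv hM φ = 1 ↔ φ = 1 := by
  rw [← (homEquiv hM).injective.eq_iff]
  rfl

end ElementaryAbelian

theorem card_surjective_hom_zmod_two :
    Nat.card {φ : PresentedGroup relsN3 →* Multiplicative (ZMod 2) //
      Function.Surjective φ} = 7 := by
  have sq_eq_one : ∀ x : Multiplicative (ZMod 2), x * x = 1 := by decide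
  let e : {φ : PresentedGroup relsN3 →* Multiplicative (ZMod 2) // Function.Surjective φ} ≃
      {f : Fin 3 → Multiplicative (ZMod 2) // f ≠ 1} :=
    (homEquiv sq_eq_one).subtypeEquiv fun φ => by
      rw [φ.surjective_iff_ne_one, ne_eq, ne_eq, homEquiv_eq_one_iff]
  rw [Nat.card_congr e, Nat.card_eq_fintype_card]
  decide

theorem v₂_mul_h_mul_v₂_inv : v₂ * h * v₂⁻¹ = h⁻¹ :=
  mul_eq_one_iff_eq_inv.mp (PresentedGroup.one_of_mem (Or.inr (Or.inl rfl)))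

theorem zpow_h_mul_v₂ (n : ℤ) : h ^ n * v₂ = v₂ * h ^ (-n) := by
  have : v₂ * h ^ (-n) * v₂⁻¹ = h ^ n := by
    rw [← conj_zpow, v₂_mul_h_mul_v₂_inv, inv_zpow', neg_neg]
  rw [← this, inv_mul_cancel_right]

theorem twist_rels_eq_one (n : ℤ) :
    ∀ r ∈ relsN3, FreeGroup.lift ![v₁, v₂ * h ^ n, h] r = 1 := by
  rintro r (rfl | rfl | rfl) <;>
    simp only [_root_.map_mul, _root_.map_inv, _root_.map_pow, FreeGroup.lift_apply_of,
      Matrix.cons_val]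
  · exact PresentedGroup.one_of_mem (Or.inl rfl)
  · calc v₂ * h ^ n * h * (v₂ * h ^ n)⁻¹ * h = v₂ * h * v₂⁻¹ * h := by group
      _ = 1 := PresentedGroup.one_of_mem (Or.inr (Or.inl rfl))
  · calc v₁ ^ 2 * (v₂ * h ^ n) ^ 2 = v₁ ^ 2 * v₂ * (h ^ n * v₂) * h ^ n := by
          rw [pow_two (v₂ * h ^ n)]; group
      _ = v₁ ^ 2 * v₂ ^ 2 := by rw [zpow_h_mul_v₂, pow_two v₂]; group
      _ = 1 := PresentedGroup.one_of_mem (Or.inr (Or.inr rfl))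

noncomputable def twist (n : ℤ) : PresentedGroup relsN3 →* PresentedGroup relsN3 :=
  PresentedGroup.toGroup (twist_rels_eq_one n)

@[simp] theorem twist_v₁ (n : ℤ) : twist n v₁ = v₁ := PresentedGroup.toGroup.of _
@[simp] theorem twist_v₂ (n : ℤ) : twist n v₂ = v₂ * h ^ n := PresentedGroup.toGroup.of _
@[simp] theorem twist_h (n : ℤ) : twist n h = h := PresentedGroup.toGroup.of _

theorem twist_comp_twist (m n : ℤ) : (twist m).comp (twist n) = twist (m + n) :=
  PresentedGroup.ext fun i => by
    fin_cases i <;> simp [zpow_add, mul_assoc]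

theorem twist_zero : twist 0 = MonoidHom.id _ :=
  PresentedGroup.ext fun i => by fin_cases i <;> simp

noncomputable def twistEquiv (n : ℤ) : PresentedGroup relsN3 ≃* PresentedGroup relsN3 :=
  MonoidHom.toMulEquiv (twist n) (twist (-n))
    (by rw [twist_comp_twist, neg_add_cancel, twist_zero])
    (by rw [twist_comp_twist, add_neg_cancel, twist_zero])

@[simp] theorem twistEquiv_apply (n : ℤ) (x : PresentedGroup relsN3) :
    twistEquiv n x = twist n x := rfl

end N3

theorem stmt17 :
    Nat.card {φ : PresentedGroup relsN3 →* Multiplicative (ZMod 2) //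
        Function.Surjective φ} = 7 ∧
    ∃ θ : PresentedGroup relsN3 ≃* PresentedGroup relsN3,
      θ (PresentedGroup.of 0) = PresentedGroup.of 0 ∧
      θ (PresentedGroup.of 1) = PresentedGroup.of 1 * PresentedGroup.of 2 ∧
      θ (PresentedGroup.of 2) = PresentedGroup.of 2 ∧
      ∀ φ₁ φ₂ : PresentedGroup relsN3 →* Multiplicative (ZMod 2),
        φ₁ (PresentedGroup.of 0) = Multiplicative.ofAdd (1 : ZMod 2) →
        φ₁ (PresentedGroup.of 1) = Multiplicative.ofAdd (1 : ZMod 2) →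
        φ₁ (PresentedGroup.of 2) = Multiplicative.ofAdd (1 : ZMod 2) →
        φ₂ (PresentedGroup.of 0) = Multiplicative.ofAdd (1 : ZMod 2) →
        φ₂ (PresentedGroup.of 1) = Multiplicative.ofAdd (0 : ZMod 2) →
        φ₂ (PresentedGroup.of 2) = Multiplicative.ofAdd (1 : ZMod 2) →
        φ₁.comp θ.toMonoidHom = φ₂ := by
  refine ⟨N3.card_surjective_hom_zmod_two, N3.twistEquiv 1, by simp, by simp, by simp, ?_⟩
  intro φ₁ φ₂ h₁₀ h₁₁ h₁₂ h₂₀ h₂₁ h₂₂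
  refine PresentedGroup.ext fun i => ?_
  fin_cases i <;> simp [h₁₀, h₁₁, h₁₂, h₂₀, h₂₁, h₂₂, ← ofAdd_add, CharTwo.add_self_eq_zero]
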